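/- Let n ≥ 4 be even and let Φ_J = [[cos(π/n), sin(π/n), 0], [−sin(π/n), cos(π/n), 0], [0, 0, 1]]. For all indices i, j, k, l ∈ {1,…,n}: if e_iᵀ Φ_J e_l = 0, e_kᵀ Φ_J e_j = 0 and e_{k+n/2}ᵀ Φ_J e_{l+n/2} = 0 (the three Hardy zero conditions for measurements built from extremal effects), then the success probability e_iᵀ Φ_J e_j equals either 0 or sin²(π/n). Hence sin²(π/n) is the optimal Hardy success probability of Φ_J over extremal measurements. -/

import Mathlib

open Real Matrix

/-- `r_n = sqrt(sec(π/n))`. -/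
noncomputable def rpoly (n : ℕ) : ℝ := Real.sqrt (1 / Real.cos (Real.pi / n))

/-- Extremal effects of the even `n`-gon model:
`e_i = (1/2)·(r_n cos((2i−1)π/n), r_n sin((2i−1)π/n), 1)ᵀ`. -/
noncomputable def eEven (n i : ℕ) : Fin 3 → ℝ :=
  (1 / 2 : ℝ) •
    ![rpoly n * Real.cos ((2 * (i : ℝ) - 1) * Real.pi / n),
      rpoly n * Real.sin ((2 * (i : ℝ) - 1) * Real.pi / n), 1]

/-- The maximally entangled state of the bipartite even `n`-gon model:
`Φ_J = [[cos(π/n), sin(π/n), 0], [−sin(π/n), cos(π/n), 0], [0,0,1]]`. -/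
noncomputable def PhiJ (n : ℕ) : Matrix (Fin 3) (Fin 3) ℝ :=
  !![Real.cos (Real.pi / n), Real.sin (Real.pi / n), 0;
     -Real.sin (Real.pi / n), Real.cos (Real.pi / n), 0;
     0, 0, 1]

/-- Probability of local effects `E` (Alice) and `F` (Bob) on a bipartite state `Φ`:
`P_Φ(E,F) = Eᵀ Φ F`. -/
noncomputable def prob (Φ : Matrix (Fin 3) (Fin 3) ℝ) (E F : Fin 3 → ℝ) : ℝ :=
  E ⬝ᵥ Φ.mulVec F

/-- for even `n ≥ 4` and any `i, j, k, l ∈ {1,…,n}`, if the three Hardy zero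
conditions hold for the measurements built from extremal effects, then the success
probability `e_iᵀ Φ_J e_j` is either `0` or `sin²(π/n)`; hence `sin²(π/n)` is the optimal
Hardy success of `Φ_J` over extremal measurements. -/
lemma cos_pi_div_pos' {n : ℕ} (hn : 4 ≤ n) : 0 < Real.cos (Real.pi / n) := by
  have h2 : (2:ℝ) < n := by exact_mod_cast (by omega : 2 < n)
  apply Real.cos_pos_of_mem_Ioo
  constructor
  · have h1 : 0 < Real.pi / n := by positivity
    linarith [Real.pi_pos]
  · exact div_lt_div_of_pos_left Real.pi_pos (by norm_num) h2

lemma prob_eq' {n : ℕ} (hn : 4 ≤ n) (a b : ℕ) :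
    prob (PhiJ n) (eEven n a) (eEven n b)
      = (Real.cos ((2*(a:ℝ) - 2*b + 1) * Real.pi / n) / Real.cos (Real.pi / n) + 1) / 4 := by
  have hc := cos_pi_div_pos' hn
  have hn0 : (n:ℝ) ≠ 0 := by positivity
  have hr : rpoly n ^ 2 = 1 / Real.cos (Real.pi / n) :=
    Real.sq_sqrt (by positivity)
  have hr' : rpoly n ^ 2 * Real.cos (Real.pi / n) = 1 := by
    rw [hr]; field_simp
  have hA : (2*(a:ℝ) - 2*b + 1) * Real.pi / n
      = ((2*(a:ℝ)-1)*Real.pi/n - (2*(b:ℝ)-1)*Real.pi/n) + Real.pi/n := by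
    field_simp; ring
  rw [hA, Real.cos_add, Real.cos_sub, Real.sin_sub]
  simp only [prob, PhiJ, eEven, Matrix.mulVec, dotProduct, Fin.sum_univ_three,
    Matrix.cons_val_zero, Matrix.cons_val_one, Matrix.head_cons, Matrix.cons_val_two,
    Matrix.tail_cons, Pi.smul_apply, smul_eq_mul,
    Matrix.of_apply, Matrix.cons_val', Matrix.empty_val', Matrix.cons_val_fin_one]
  simp
  field_simp
  rw [show Real.pi * (2*(b:ℝ)-1) / n = (2*(b:ℝ)-1)*Real.pi/n by ring]
  linear_combination (4 * ((Real.cos ((2*(a:ℝ)-1)*Real.pi/n) * Real.cos ((2*(b:ℝ)-1)*Real.pi/n)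
      + Real.sin ((2*(a:ℝ)-1)*Real.pi/n) * Real.sin ((2*(b:ℝ)-1)*Real.pi/n)) * Real.cos (Real.pi/n)
    - (Real.sin ((2*(a:ℝ)-1)*Real.pi/n) * Real.cos ((2*(b:ℝ)-1)*Real.pi/n)
      - Real.cos ((2*(a:ℝ)-1)*Real.pi/n) * Real.sin ((2*(b:ℝ)-1)*Real.pi/n)) * Real.sin (Real.pi/n))) * hr'

lemma cos_int_shift' {n : ℕ} (hn : 4 ≤ n) (m c k : ℤ) (h : m = 2*k*n + c) :
    Real.cos ((m:ℝ) * Real.pi / n) = Real.cos ((c:ℝ) * Real.pi / n) := by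
  have hn0 : (n:ℝ) ≠ 0 := by positivity
  have : (m:ℝ) * Real.pi / n = (c:ℝ) * Real.pi / n + (k:ℝ) * (2*Real.pi) := by
    have hm : (m:ℝ) = 2*k*n + c := by exact_mod_cast h
    rw [hm]; field_simp; ring
  rw [this, Real.cos_add_int_mul_two_pi]

lemma cast_angle (a b : ℕ) (x : ℝ) :
    (2*(a:ℝ) - 2*b + 1) * x = ((2*(a:ℤ) - 2*b + 1 : ℤ):ℝ) * x := by
  push_cast; ring

/-- If the integer `m = 2a-2b+1` is `≡ n±1 (mod 2n)`, probability is zero. -/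
lemma prob_zero' {n : ℕ} (hn : 4 ≤ n) (a b : ℕ)
    (h : ∃ k : ℤ, 2*(a:ℤ) - 2*b + 1 = 2*k*n + (n-1) ∨
                  2*(a:ℤ) - 2*b + 1 = 2*k*n + (n+1)) :
    prob (PhiJ n) (eEven n a) (eEven n b) = 0 := by
  have hc := cos_pi_div_pos' hn
  have hn0 : (n:ℝ) ≠ 0 := by positivity
  rw [prob_eq' hn]
  have hcos : Real.cos ((2*(a:ℝ) - 2*b + 1) * Real.pi / n) = -Real.cos (Real.pi / n) := by
    rw [mul_div_assoc, cast_angle, ← mul_div_assoc]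
    obtain ⟨k, h | h⟩ := h
    · rw [cos_int_shift' hn _ _ _ h]
      have : (((n:ℤ)-1 : ℤ):ℝ) * Real.pi / n = Real.pi - Real.pi / n := by
        push_cast; field_simp
      rw [this, Real.cos_pi_sub]
    · rw [cos_int_shift' hn _ _ _ h]
      have : (((n:ℤ)+1 : ℤ):ℝ) * Real.pi / n = Real.pi + Real.pi / n := by
        push_cast; field_simp
      rw [this, Real.cos_add, Real.cos_pi, Real.sin_pi]; ring
  rw [hcos]
  field_simp
  ring

/-- If the integer `m = 2a-2b+1` is `≡ n±3 (mod 2n)`, probability is `sin²(π/n)`. -/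
lemma prob_sin' {n : ℕ} (hn : 4 ≤ n) (a b : ℕ)
    (h : ∃ k : ℤ, 2*(a:ℤ) - 2*b + 1 = 2*k*n + (n-3) ∨
                  2*(a:ℤ) - 2*b + 1 = 2*k*n + (n+3)) :
    prob (PhiJ n) (eEven n a) (eEven n b) = Real.sin (Real.pi / n) ^ 2 := by
  have hc := cos_pi_div_pos' hn
  have hn0 : (n:ℝ) ≠ 0 := by positivity
  rw [prob_eq' hn]
  have hcos : Real.cos ((2*(a:ℝ) - 2*b + 1) * Real.pi / n)
      = -Real.cos (3 * (Real.pi / n)) := by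
    rw [mul_div_assoc, cast_angle, ← mul_div_assoc]
    obtain ⟨k, h | h⟩ := h
    · rw [cos_int_shift' hn _ _ _ h]
      have : (((n:ℤ)-3 : ℤ):ℝ) * Real.pi / n = Real.pi - 3 * (Real.pi / n) := by
        push_cast; field_simp
      rw [this, Real.cos_pi_sub]
    · rw [cos_int_shift' hn _ _ _ h]
      have : (((n:ℤ)+3 : ℤ):ℝ) * Real.pi / n = Real.pi + 3 * (Real.pi / n) := by
        push_cast; field_simp
      rw [this, Real.cos_add, Real.cos_pi, Real.sin_pi]; ring
  rw [hcos, Real.cos_three_mul, Real.sin_sq]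
  field_simp
  ring

/-- Converse: probability zero forces `m ≡ n±1 (mod 2n)`. -/
lemma of_prob_zero' {n : ℕ} (hn : 4 ≤ n) (a b : ℕ)
    (h : prob (PhiJ n) (eEven n a) (eEven n b) = 0) :
    ∃ k : ℤ, 2*(a:ℤ) - 2*b + 1 = 2*k*n + (n-1) ∨
             2*(a:ℤ) - 2*b + 1 = 2*k*n + (n+1) := by
  have hc := cos_pi_div_pos' hn
  have hn0 : (n:ℝ) ≠ 0 := by positivity
  have hπ := Real.pi_ne_zero
  rw [prob_eq' hn] at h
  have hcos : Real.cos ((2*(a:ℝ) - 2*b + 1) * Real.pi / n)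
      = Real.cos (Real.pi - Real.pi / n) := by
    rw [Real.cos_pi_sub]
    have h' : Real.cos ((2*(a:ℝ) - 2*b + 1) * Real.pi / n) / Real.cos (Real.pi/n) + 1 = 0 := by
      linarith
    field_simp at h'
    rw [show (2*(a:ℝ) - 2*b + 1) = 2*(a-b)+1 by ring]
    linarith
  rw [Real.cos_eq_cos_iff] at hcos
  obtain ⟨k, hk | hk⟩ := hcos
  · have hint : ((n:ℤ) - 1 : ℤ) = 2*k*n + (2*(a:ℤ) - 2*b + 1) := by
      have h2 : (((n:ℤ) - 1 : ℤ):ℝ) * (Real.pi / n)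
          = ((2*k*(n:ℤ) + (2*(a:ℤ) - 2*b + 1) : ℤ):ℝ) * (Real.pi / n) := by
        push_cast
        field_simp at hk ⊢
        linear_combination hk
      have hne : Real.pi / (n:ℝ) ≠ 0 := by positivity
      exact_mod_cast mul_right_cancel₀ hne h2
    exact ⟨-k, Or.inl (by linear_combination -hint)⟩
  · have hint : ((n:ℤ) - 1 : ℤ) = 2*k*n - (2*(a:ℤ) - 2*b + 1) := by
      have h2 : (((n:ℤ) - 1 : ℤ):ℝ) * (Real.pi / n)
          = ((2*k*(n:ℤ) - (2*(a:ℤ) - 2*b + 1) : ℤ):ℝ) * (Real.pi / n) := by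
        push_cast
        field_simp at hk ⊢
        linear_combination hk
      have hne : Real.pi / (n:ℝ) ≠ 0 := by positivity
      exact_mod_cast mul_right_cancel₀ hne h2
    exact ⟨k-1, Or.inr (by linear_combination hint)⟩

theorem even_gon_max_entangled_hardy_optimal
    (n : ℕ) (hn : 4 ≤ n) (heven : Even n) :
    ∀ i ∈ Finset.Icc 1 n, ∀ j ∈ Finset.Icc 1 n, ∀ k ∈ Finset.Icc 1 n, ∀ l ∈ Finset.Icc 1 n,
      prob (PhiJ n) (eEven n i) (eEven n l) = 0 →
      prob (PhiJ n) (eEven n k) (eEven n j) = 0 →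
      prob (PhiJ n) (eEven n (k + n / 2)) (eEven n (l + n / 2)) = 0 →
      (prob (PhiJ n) (eEven n i) (eEven n j) = 0 ∨
       prob (PhiJ n) (eEven n i) (eEven n j) = Real.sin (Real.pi / n) ^ 2) := by
  intro i _ j _ k _ l _ h1 h2 h3
  obtain ⟨k1, hk1⟩ := of_prob_zero' hn i l h1
  obtain ⟨k2, hk2⟩ := of_prob_zero' hn k j h2
  obtain ⟨k3, hk3⟩ := of_prob_zero' hn (k + n/2) (l + n/2) h3
  have hk3' : 2*(k:ℤ) - 2*l + 1 = 2*k3*n + ((n:ℤ)-1) ∨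
              2*(k:ℤ) - 2*l + 1 = 2*k3*n + ((n:ℤ)+1) := by
    rcases hk3 with h | h
    · left; push_cast at h; linear_combination h
    · right; push_cast at h; linear_combination h
  clear hk3
  rcases hk1 with h1' | h1' <;> rcases hk2 with h2' | h2' <;> rcases hk3' with h3' | h3'
  · exact Or.inl (prob_zero' hn i j ⟨k1+k2-k3, Or.inl (by linear_combination h1'+h2'-h3')⟩)
  · exact Or.inr (prob_sin' hn i j ⟨k1+k2-k3, Or.inl (by linear_combination h1'+h2'-h3')⟩)
  · exact Or.inl (prob_zero' hn i j ⟨k1+k2-k3, Or.inr (by linear_combination h1'+h2'-h3')⟩)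
  · exact Or.inl (prob_zero' hn i j ⟨k1+k2-k3, Or.inl (by linear_combination h1'+h2'-h3')⟩)
  · exact Or.inl (prob_zero' hn i j ⟨k1+k2-k3, Or.inr (by linear_combination h1'+h2'-h3')⟩)
  · exact Or.inl (prob_zero' hn i j ⟨k1+k2-k3, Or.inl (by linear_combination h1'+h2'-h3')⟩)
  · exact Or.inr (prob_sin' hn i j ⟨k1+k2-k3, Or.inr (by linear_combination h1'+h2'-h3')⟩)
  · exact Or.inl (prob_zero' hn i j ⟨k1+k2-k3, Or.inr (by linear_combination h1'+h2'-h3')⟩)
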